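/- Let n ≥ 5 and let C = (c_{ij}) be an n×n matrix over K with every entry nonzero. If Π_{i=1}^n c_{i,w(i)} = 1 for every odd permutation w ∈ S_n \ A_n, then c_{ij} = c_{i1}·c_{1j}/c_{11} for all 1 ≤ i, j ≤ n; in particular rank(C) = 1. -/
import Mathlib


open Matrix Finset

lemma exists_perm_eq3 {n : ℕ} (i1 i2 i3 j1 j2 j3 : Fin n)
    (h12 : i1 ≠ i2) (h13 : i1 ≠ i3) (h23 : i2 ≠ i3)
    (g12 : j1 ≠ j2) (g13 : j1 ≠ j3) (g23 : j2 ≠ j3) :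
    ∃ σ : Equiv.Perm (Fin n), σ i1 = j1 ∧ σ i2 = j2 ∧ σ i3 = j3 := by
  classical
  set σ1 : Equiv.Perm (Fin n) := Equiv.swap i1 j1 with hσ1
  have e1 : σ1 i1 = j1 := Equiv.swap_apply_left _ _
  set a2 := σ1 i2 with ha2
  have ha2j1 : a2 ≠ j1 := by
    rw [ha2, ← e1]
    exact fun hh => h12 (σ1.injective hh).symm
  set σ2 : Equiv.Perm (Fin n) := Equiv.swap a2 j2 * σ1 with hσ2
  have e2 : σ2 i2 = j2 := by
    rw [hσ2, Equiv.Perm.mul_apply, ← ha2, Equiv.swap_apply_left]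
  have e1' : σ2 i1 = j1 := by
    rw [hσ2, Equiv.Perm.mul_apply, e1, Equiv.swap_apply_of_ne_of_ne ha2j1.symm g12]
  set a3 := σ2 i3 with ha3
  have ha3j1 : a3 ≠ j1 := by
    rw [ha3, ← e1']
    exact fun hh => h13 (σ2.injective hh).symm
  have ha3j2 : a3 ≠ j2 := by
    rw [ha3, ← e2]
    exact fun hh => h23 (σ2.injective hh).symm
  refine ⟨Equiv.swap a3 j3 * σ2, ?_, ?_, ?_⟩
  · rw [Equiv.Perm.mul_apply, e1', Equiv.swap_apply_of_ne_of_ne ha3j1.symm g13]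
  · rw [Equiv.Perm.mul_apply, e2, Equiv.swap_apply_of_ne_of_ne ha3j2.symm g23]
  · rw [Equiv.Perm.mul_apply, ← ha3, Equiv.swap_apply_left]
lemma exists_odd_perm_eq3 {n : ℕ} (hn : 5 ≤ n) (i1 i2 i3 j1 j2 j3 : Fin n)
    (h12 : i1 ≠ i2) (h13 : i1 ≠ i3) (h23 : i2 ≠ i3)
    (g12 : j1 ≠ j2) (g13 : j1 ≠ j3) (g23 : j2 ≠ j3)
    (hex : ∃ σ : Equiv.Perm (Fin n), σ i1 = j1 ∧ σ i2 = j2 ∧ σ i3 = j3) :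
    ∃ w : Equiv.Perm (Fin n), Equiv.Perm.sign w = -1 ∧ w i1 = j1 ∧ w i2 = j2 ∧ w i3 = j3 := by
  classical
  obtain ⟨σ, e1, e2, e3⟩ := hex
  have hcard : 1 < (({i1, i2, i3} : Finset (Fin n))ᶜ).card := by
    have h3 : ({i1, i2, i3} : Finset (Fin n)).card ≤ 3 := by
      apply le_trans (Finset.card_insert_le _ _)
      have := Finset.card_insert_le i2 ({i3} : Finset (Fin n))
      simp at this ⊢
      omega
    rw [Finset.card_compl]
    simp only [Fintype.card_fin]
    omega
  obtain ⟨a, ha, b, hb, hab⟩ := Finset.one_lt_card.mp hcard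
  simp only [Finset.mem_compl, Finset.mem_insert, Finset.mem_singleton, not_or] at ha hb
  rcases Int.units_eq_one_or (Equiv.Perm.sign σ) with hs | hs
  · refine ⟨σ * Equiv.swap a b, ?_, ?_, ?_, ?_⟩
    · rw [Equiv.Perm.sign_mul, hs, Equiv.Perm.sign_swap hab, one_mul]
    · rw [Equiv.Perm.mul_apply, Equiv.swap_apply_of_ne_of_ne (Ne.symm ?_) (Ne.symm ?_), e1]
      exacts [ha.1, hb.1]
    · rw [Equiv.Perm.mul_apply, Equiv.swap_apply_of_ne_of_ne (Ne.symm ?_) (Ne.symm ?_), e2]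
      exacts [ha.2.1, hb.2.1]
    · rw [Equiv.Perm.mul_apply, Equiv.swap_apply_of_ne_of_ne (Ne.symm ?_) (Ne.symm ?_), e3]
      exacts [ha.2.2, hb.2.2]
  · exact ⟨σ, hs, e1, e2, e3⟩

lemma star_rel {K : Type*} [Field K] {n : ℕ} (hn : 5 ≤ n) (C : Matrix (Fin n) (Fin n) K)
    (hC : ∀ i j : Fin n, C i j ≠ 0)
    (h : ∀ w : Equiv.Perm (Fin n), Equiv.Perm.sign w = -1 → ∏ i, C i (w i) = 1)
    (hex : ∀ (i1 i2 i3 j1 j2 j3 : Fin n), i1 ≠ i2 → i1 ≠ i3 → i2 ≠ i3 →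
      j1 ≠ j2 → j1 ≠ j3 → j2 ≠ j3 →
      ∃ w : Equiv.Perm (Fin n), Equiv.Perm.sign w = -1 ∧ w i1 = j1 ∧ w i2 = j2 ∧ w i3 = j3)
    (i1 i2 i3 j1 j2 j3 : Fin n)
    (h12 : i1 ≠ i2) (h13 : i1 ≠ i3) (h23 : i2 ≠ i3)
    (g12 : j1 ≠ j2) (g13 : j1 ≠ j3) (g23 : j2 ≠ j3) :
    C i1 j2 * C i2 j3 * C i3 j1 = C i1 j1 * C i2 j2 * C i3 j3 := by
  classical
  obtain ⟨w, hw, e1, e2, e3⟩ := hex i1 i2 i3 j1 j2 j3 h12 h13 h23 g12 g13 g23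
  set c : Equiv.Perm (Fin n) := Equiv.swap j1 j2 * Equiv.swap j2 j3 with hc
  have hc1 : c j1 = j2 := by
    rw [hc, Equiv.Perm.mul_apply, Equiv.swap_apply_of_ne_of_ne g12 g13,
      Equiv.swap_apply_left]
  have hc2 : c j2 = j3 := by
    rw [hc, Equiv.Perm.mul_apply, Equiv.swap_apply_left,
      Equiv.swap_apply_of_ne_of_ne (Ne.symm g13) (Ne.symm g23)]
  have hc3 : c j3 = j1 := by
    rw [hc, Equiv.Perm.mul_apply, Equiv.swap_apply_right, Equiv.swap_apply_right]
  have hsign : Equiv.Perm.sign (c * w) = -1 := by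
    rw [Equiv.Perm.sign_mul, hc, Equiv.Perm.sign_mul, Equiv.Perm.sign_swap g12,
      Equiv.Perm.sign_swap g23, hw]
    decide
  have h1 := h w hw
  have h2 := h (c * w) hsign
  set t : Finset (Fin n) := {i1, i2, i3} with ht
  have key : (∏ i ∈ t, C i ((c * w) i)) * ∏ i ∈ tᶜ, C i ((c * w) i)
      = (∏ i ∈ t, C i (w i)) * ∏ i ∈ tᶜ, C i (w i) := by
    rw [Finset.prod_mul_prod_compl, Finset.prod_mul_prod_compl, h1, h2]
  have hoff : ∀ i ∈ tᶜ, C i ((c * w) i) = C i (w i) := by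
    intro i hi
    simp only [ht, Finset.mem_compl, Finset.mem_insert, Finset.mem_singleton, not_or] at hi
    have hw1 : w i ≠ j1 := fun hh => hi.1 (w.injective (hh.trans e1.symm))
    have hw2 : w i ≠ j2 := fun hh => hi.2.1 (w.injective (hh.trans e2.symm))
    have hw3 : w i ≠ j3 := fun hh => hi.2.2 (w.injective (hh.trans e3.symm))
    rw [Equiv.Perm.mul_apply, hc, Equiv.Perm.mul_apply,
      Equiv.swap_apply_of_ne_of_ne hw2 hw3, Equiv.swap_apply_of_ne_of_ne hw1 hw2]
  rw [Finset.prod_congr rfl hoff] at key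
  have hne : ∏ i ∈ tᶜ, C i (w i) ≠ 0 :=
    Finset.prod_ne_zero_iff.mpr fun i _ => hC _ _
  have key2 : (∏ i ∈ t, C i ((c * w) i)) = ∏ i ∈ t, C i (w i) :=
    mul_right_cancel₀ hne key
  have hm1 : i1 ∉ ({i2, i3} : Finset (Fin n)) := by simp [h12, h13]
  have hm2 : i2 ∉ ({i3} : Finset (Fin n)) := by simp [h23]
  have hexp : ∀ f : Fin n → K, ∏ i ∈ t, f i = f i1 * f i2 * f i3 := by
    intro f
    rw [ht, show ({i1, i2, i3} : Finset (Fin n)) = insert i1 (insert i2 {i3}) from rfl,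
      Finset.prod_insert hm1, Finset.prod_insert hm2, Finset.prod_singleton, mul_assoc]
  rw [hexp, hexp] at key2
  have f1 : (c * w) i1 = j2 := by rw [Equiv.Perm.mul_apply, e1]; exact hc1
  have f2 : (c * w) i2 = j3 := by rw [Equiv.Perm.mul_apply, e2]; exact hc2
  have f3 : (c * w) i3 = j1 := by rw [Equiv.Perm.mul_apply, e3]; exact hc3
  rw [f1, f2, f3, e1, e2, e3] at key2
  exact key2
lemma exists_ne3 {n : ℕ} (hn : 5 ≤ n) (u v w : Fin n) :
    ∃ x : Fin n, x ≠ u ∧ x ≠ v ∧ x ≠ w := by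
  classical
  have hcard : 0 < (({u, v, w} : Finset (Fin n))ᶜ).card := by
    have h3 : ({u, v, w} : Finset (Fin n)).card ≤ 3 := by
      apply le_trans (Finset.card_insert_le _ _)
      have := Finset.card_insert_le v ({w} : Finset (Fin n))
      simp at this ⊢
      omega
    rw [Finset.card_compl]
    simp only [Fintype.card_fin]
    omega
  obtain ⟨x, hx⟩ := Finset.card_pos.mp hcard
  simp only [Finset.mem_compl, Finset.mem_insert, Finset.mem_singleton, not_or] at hx
  exact ⟨x, hx.1, hx.2.1, hx.2.2⟩


/-- for `n ≥ 5`, if all entries of `C` are nonzero and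
`Π_i c_{i,w(i)} = 1` for every odd permutation `w ∈ S_n \ A_n`, then
`c_{ij} = c_{i1}·c_{1j}/c_{11}` for all `i, j`; in particular `rank C = 1`. -/
theorem rank_one_of_all_odd_perm_products_one {K : Type*} [Field K] [CharZero K]
    {n : ℕ} (hn : 5 ≤ n) (C : Matrix (Fin n) (Fin n) K)
    (hC : ∀ i j : Fin n, C i j ≠ 0)
    (h : ∀ w : Equiv.Perm (Fin n), Equiv.Perm.sign w = -1 → ∏ i, C i (w i) = 1) :
    (∀ i j : Fin n, C i j = C i ⟨0, by omega⟩ * C ⟨0, by omega⟩ j / C ⟨0, by omega⟩ ⟨0, by omega⟩) ∧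
      C.rank = 1 := by
  classical
  have hex : ∀ (i1 i2 i3 j1 j2 j3 : Fin n), i1 ≠ i2 → i1 ≠ i3 → i2 ≠ i3 →
      j1 ≠ j2 → j1 ≠ j3 → j2 ≠ j3 →
      ∃ w : Equiv.Perm (Fin n), Equiv.Perm.sign w = -1 ∧ w i1 = j1 ∧ w i2 = j2 ∧ w i3 = j3 :=
    fun i1 i2 i3 j1 j2 j3 h12 h13 h23 g12 g13 g23 =>
      exists_odd_perm_eq3 hn i1 i2 i3 j1 j2 j3 h12 h13 h23 g12 g13 g23
        (exists_perm_eq3 i1 i2 i3 j1 j2 j3 h12 h13 h23 g12 g13 g23)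
  have star : ∀ (i1 i2 i3 j1 j2 j3 : Fin n),
      i1 ≠ i2 → i1 ≠ i3 → i2 ≠ i3 → j1 ≠ j2 → j1 ≠ j3 → j2 ≠ j3 →
      C i1 j2 * C i2 j3 * C i3 j1 = C i1 j1 * C i2 j2 * C i3 j3 :=
    fun i1 i2 i3 j1 j2 j3 h12 h13 h23 g12 g13 g23 =>
      star_rel hn C hC h hex i1 i2 i3 j1 j2 j3 h12 h13 h23 g12 g13 g23
  classical
  set z : Fin n := ⟨0, by omega⟩ with hz
  have R : ∀ i k j j' : Fin n, i ≠ z → k ≠ z → i ≠ k → j ≠ z → j' ≠ z → j ≠ j' →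
      C i j * C z z * C k j' = C i j' * C z j * C k z := by
    intro i k j j' hiz hkz hik hjz hj'z hjj'
    exact star i z k j' j z hiz hik (Ne.symm hkz) (Ne.symm hjj') hj'z hjz
  have P : ∀ k j j' : Fin n, k ≠ z → j ≠ z → j' ≠ z → j ≠ j' →
      (C z z * C z z) * (C k j * C k j') = (C z j * C z j') * (C k z * C k z) := by
    intro k j j' hkz hjz hj'z hjj'
    obtain ⟨i, hik, hiz, -⟩ := exists_ne3 hn k z z
    have R1 := R i k j j' hiz hkz hik hjz hj'z hjj'
    have R2 := R i k j' j hiz hkz hik hj'z hjz (Ne.symm hjj')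
    have E : (C i j * C z z * C k j') * (C i j' * C z z * C k j)
        = (C i j' * C z j * C k z) * (C i j * C z j' * C k z) := by rw [R1, R2]
    have E2 : (C i j * C i j') * ((C z z * C z z) * (C k j * C k j'))
        = (C i j * C i j') * ((C z j * C z j') * (C k z * C k z)) := by
      linear_combination E
    exact mul_left_cancel₀ (mul_ne_zero (hC i j) (hC i j')) E2
  have Q : ∀ k a b : Fin n, k ≠ z → a ≠ z → b ≠ z → C k a * C z b = C k b * C z a := by
    intro k a b hkz haz hbz
    by_cases hab : a = b
    · rw [hab]
    · obtain ⟨j1, hj1a, hj1b, hj1z⟩ := exists_ne3 hn a b z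
      have P1 := P k j1 a hkz hj1z haz hj1a
      have P2 := P k j1 b hkz hj1z hbz hj1b
      have E : ((C z z * C z z) * (C k j1 * C k a)) * C k b
          = ((C z z * C z z) * (C k j1 * C k b)) * C k a := by ring
      rw [P1, P2] at E
      have E2 : (C z j1 * (C k z * C k z)) * (C z a * C k b)
          = (C z j1 * (C k z * C k z)) * (C z b * C k a) := by linear_combination E
      have E3 := mul_left_cancel₀ (mul_ne_zero (hC z j1) (mul_ne_zero (hC k z) (hC k z))) E2
      linear_combination -E3
  have G : ∀ k j' : Fin n, k ≠ z → j' ≠ z → C k j' * C z z = C k z * C z j' := by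
    intro k j' hkz hj'z
    obtain ⟨i, hik, hiz, -⟩ := exists_ne3 hn k z z
    obtain ⟨j, hjj', hjz, -⟩ := exists_ne3 hn j' z z
    have A := R i k j j' hiz hkz hik hjz hj'z hjj'
    have B := Q i j' j hiz hj'z hjz
    have E : C i j * (C k j' * C z z) = C i j * (C k z * C z j') := by
      linear_combination A + C k z * B
    exact mul_left_cancel₀ (hC i j) E
  have entry : ∀ i j : Fin n, C i j = C i z * C z j / C z z := by
    intro i j
    rw [eq_div_iff (hC z z)]
    by_cases hiz : i = z
    · rw [hiz]; ring
    · by_cases hjz : j = z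
      · rw [hjz]
      · linear_combination G i j hiz hjz
  refine ⟨entry, ?_⟩
  -- rank
  set A : Matrix (Fin n) (Fin 1) K := Matrix.of (fun i _ => C i z) with hA
  set B : Matrix (Fin 1) (Fin n) K := Matrix.of (fun _ j => C z j / C z z) with hB
  have hCAB : C = A * B := by
    ext i j
    rw [Matrix.mul_apply, Fin.sum_univ_one]
    show C i j = C i z * (C z j / C z z)
    rw [entry i j, mul_div_assoc]
  have hle : C.rank ≤ 1 := by
    rw [hCAB]
    refine le_trans (Matrix.rank_mul_le_right A B) ?_
    have := Matrix.rank_le_card_height B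
    simpa using this
  have hge : 1 ≤ C.rank := by
    rw [Matrix.rank]
    rw [Nat.one_le_iff_ne_zero, ← Nat.pos_iff_ne_zero]
    rw [Module.finrank_pos_iff_exists_ne_zero]
    refine ⟨⟨C.mulVecLin (Pi.single z 1), LinearMap.mem_range_self _ _⟩, ?_⟩
    intro hcontra
    rw [Submodule.mk_eq_zero] at hcontra
    have : C.mulVecLin (Pi.single z 1) z = 0 := by rw [hcontra]; rfl
    rw [Matrix.mulVecLin_apply, Matrix.mulVec_single] at this
    simp at this
    exact hC z z this
  omega
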